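/- Let Y be a random variable on a finite set 𝒴 with distribution q ∈ Δ, and let Φ: Δ → ℝ be convex and differentiable with conjugate Φ*. Then for any ν ∈ dom(Φ*), E_{Y∼q}[d_Φ(1_Y, ν)] = E_{Y∼q}[Φ(1_Y)] − Φ(q) + d_Φ(q, ν). Consequently, ν minimizes E_{Y∼q}[d_Φ(1_Y, ν)] over dom(Φ*) if and only if ∇Φ*(ν) = q (when Φ* is differentiable), i.e., the minimizer predicts the true distribution q. -/

import Mathlib

/-! Averaged over `Y ∼ q`, the Fenchel–Young loss `d_Φ(1_Y, ν)` is affine in the one-hot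
vector, so its expectation only sees `E[1_Y] = q`: it equals `E[Φ(1_Y)] + (Φ*(ν) − ⟪q, ν⟫)`,
which is the first identity. The map `ν ↦ Φ*(ν) − ⟪q, ν⟫` is convex, since `Φ*` is a supremum
of affine functions (bounded above because `Φ` is continuous on the compact simplex), so its
global minimizers are exactly its critical points, i.e. the `ν` with `∇Φ*(ν) = q`. -/

open RealInnerProductSpace

theorem convexOn_ciSup {E ι : Type*} [AddCommGroup E] [Module ℝ E] [Nonempty ι] {s : Set E}
    {f : ι → E → ℝ} (hf : ∀ i, ConvexOn ℝ s (f i))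
    (hbdd : ∀ x ∈ s, BddAbove (Set.range fun i => f i x)) :
    ConvexOn ℝ s fun x => ⨆ i, f i x := by
  refine ⟨(hf (Classical.arbitrary ι)).1, fun x hx y hy a b ha hb hab => ciSup_le fun i => ?_⟩
  calc f i (a • x + b • y) ≤ a • f i x + b • f i y := (hf i).2 hx hy ha hb hab
    _ ≤ a • (⨆ j, f j x) + b • ⨆ j, f j y :=
      add_le_add (smul_le_smul_of_nonneg_left (le_ciSup (hbdd x hx) i) ha)
        (smul_le_smul_of_nonneg_left (le_ciSup (hbdd y hy) i) hb)

theorem ConvexOn.le_of_hasFDerivAt_eq_zero {E : Type*} [NormedAddCommGroup E] [NormedSpace ℝ E]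
    {f : E → ℝ} {x : E} (hf : ConvexOn ℝ Set.univ f) (hx : HasFDerivAt f (0 : E →L[ℝ] ℝ) x)
    (y : E) : f x ≤ f y := by
  have hline : ConvexOn ℝ Set.univ (f ∘ AffineMap.lineMap (k := ℝ) x y) := by
    simpa using hf.comp_affineMap (AffineMap.lineMap x y)
  have hderiv : HasDerivAt (f ∘ AffineMap.lineMap (k := ℝ) x y) 0 0 := by
    simpa using (AffineMap.lineMap_apply_zero (k := ℝ) x y ▸ hx).comp_hasDerivAt (0 : ℝ)
      AffineMap.hasDerivAt_lineMap
  simpa [slope_def_field] using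
    hline.le_slope_of_hasDerivAt (Set.mem_univ 0) (Set.mem_univ 1) zero_lt_one hderiv

theorem ConvexOn.forall_le_iff_fderiv_eq_zero {E : Type*} [NormedAddCommGroup E]
    [NormedSpace ℝ E] {f : E → ℝ} {x : E} (hf : ConvexOn ℝ Set.univ f)
    (hfx : DifferentiableAt ℝ f x) : (∀ y, f x ≤ f y) ↔ fderiv ℝ f x = 0 :=
  ⟨fun hmin => IsLocalMin.fderiv_eq_zero (Filter.Eventually.of_forall hmin),
    fun h => hf.le_of_hasFDerivAt_eq_zero (h ▸ hfx.hasFDerivAt)⟩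

theorem fderiv_sub_inner_eq_zero_iff {E : Type*} [NormedAddCommGroup E] [InnerProductSpace ℝ E]
    [CompleteSpace E] {f : E → ℝ} {x : E} (hfx : DifferentiableAt ℝ f x) (a : E) :
    fderiv ℝ (fun y => f y - ⟪a, y⟫) x = 0 ↔ gradient f x = a := by
  have hsub : HasFDerivAt (fun y => f y - ⟪a, y⟫)
      (InnerProductSpace.toDual ℝ E (gradient f x - a)) x := by
    have hdual : InnerProductSpace.toDual ℝ E a = innerSL ℝ a := by
      ext y
      simp [InnerProductSpace.toDual_apply_apply]
    rw [map_sub, hdual]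
    exact hfx.hasGradientAt.hasFDerivAt.fun_sub (innerSL ℝ a).hasFDerivAt
  rw [hsub.fderiv, LinearIsometryEquiv.map_eq_zero_iff, sub_eq_zero]

theorem convexOn_ciSup_inner_sub {E : Type*} [NormedAddCommGroup E] [InnerProductSpace ℝ E]
    {S : Set E} (hS : IsCompact S) (hne : S.Nonempty) {Φ : E → ℝ} (hΦ : ContinuousOn Φ S) :
    ConvexOn ℝ Set.univ fun ν => ⨆ p : S, ⟪(p : E), ν⟫ - Φ p := by
  have := hne.to_subtype
  refine convexOn_ciSup (fun p => ?_) (fun ν _ => ?_)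
  · exact ((innerₗ E (p : E)).convexOn convex_univ).sub (concaveOn_const _ convex_univ)
  · have hc : ContinuousOn (fun p => ⟪p, ν⟫ - Φ p) S :=
      (continuous_id.inner continuous_const).continuousOn.sub hΦ
    simpa only [Set.image_eq_range] using (hS.image_of_continuousOn hc).bddAbove

theorem EuclideanSpace.isCompact_stdSimplex (ι : Type*) [Fintype ι] :
    IsCompact {p : EuclideanSpace ℝ ι | (∀ i, 0 ≤ p i) ∧ ∑ i, p i = 1} := by
  convert (_root_.isCompact_stdSimplex ℝ ι).image (PiLp.continuous_toLp 2 _) using 1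
  ext p
  exact ⟨fun hp => ⟨p.ofLp, hp, rfl⟩, by rintro ⟨p, hp, rfl⟩; exact hp⟩

theorem EuclideanSpace.sum_smul_single {ι : Type*} [Fintype ι] [DecidableEq ι]
    (q : EuclideanSpace ℝ ι) : ∑ i, q i • EuclideanSpace.single i (1 : ℝ) = q := by
  simpa using (EuclideanSpace.basisFun ι ℝ).sum_repr q

section FenchelYoung

variable {E : Type*} [NormedAddCommGroup E] [InnerProductSpace ℝ E]

/-- `d_Φ` with an arbitrary `Ψ` in place of the conjugate `Φ*`. -/
def fenchelYoungLoss (Φ Ψ : E → ℝ) (μ ν : E) : ℝ := Φ μ + Ψ ν - ⟪μ, ν⟫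

theorem sum_mul_fenchelYoungLoss {ι : Type*} [Fintype ι] {w : ι → ℝ} (hw : ∑ i, w i = 1)
    (Φ Ψ : E → ℝ) (x : ι → E) (ν : E) :
    ∑ i, w i * fenchelYoungLoss Φ Ψ (x i) ν
      = ∑ i, w i * Φ (x i) + (Ψ ν - ⟪∑ i, w i • x i, ν⟫) := by
  simp only [fenchelYoungLoss, mul_sub, mul_add, Finset.sum_sub_distrib, Finset.sum_add_distrib,
    ← Finset.sum_mul, hw, sum_inner, real_inner_smul_left]
  ring

end FenchelYoung

theorem fenchel_young_expectation_optimality_general (d : ℕ)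
    (q : EuclideanSpace ℝ (Fin d)) (hq0 : ∀ i, 0 ≤ q i) (hq1 : ∑ i, q i = 1)
    (Φ : EuclideanSpace ℝ (Fin d) → ℝ) (hdiff : Differentiable ℝ Φ)
    (Φs : EuclideanSpace ℝ (Fin d) → ℝ)
    (hΦs : ∀ ν, Φs ν =
      ⨆ p : {p : EuclideanSpace ℝ (Fin d) // (∀ i, 0 ≤ p i) ∧ ∑ i, p i = 1},
        ⟪p.1, ν⟫ - Φ p.1)
    (hΦsdiff : Differentiable ℝ Φs)
    (onehot : Fin d → EuclideanSpace ℝ (Fin d))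
    (hone : ∀ y i, onehot y i = if i = y then 1 else 0)
    (dΦ : EuclideanSpace ℝ (Fin d) → EuclideanSpace ℝ (Fin d) → ℝ)
    (hd : ∀ μ ν, dΦ μ ν = Φ μ + Φs ν - ⟪μ, ν⟫)
    (ν : EuclideanSpace ℝ (Fin d)) :
    (∑ y, q y * dΦ (onehot y) ν) = (∑ y, q y * Φ (onehot y)) - Φ q + dΦ q ν ∧
    ((∀ ν', (∑ y, q y * dΦ (onehot y) ν) ≤ ∑ y, q y * dΦ (onehot y) ν')
      ↔ gradient Φs ν = q) := by
  obtain rfl : dΦ = fenchelYoungLoss Φ Φs := funext₂ hd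
  obtain rfl : onehot = fun y => EuclideanSpace.single y 1 := by
    funext y
    ext i
    simp [hone, PiLp.single_apply]
  have hexpect : ∀ ν', ∑ y, q y * fenchelYoungLoss Φ Φs (EuclideanSpace.single y 1) ν'
      = ∑ y, q y * Φ (EuclideanSpace.single y 1) + (Φs ν' - ⟪q, ν'⟫) := fun ν' => by
    rw [sum_mul_fenchelYoungLoss hq1, EuclideanSpace.sum_smul_single]
  have hconvex : ConvexOn ℝ Set.univ fun ν' => Φs ν' - ⟪q, ν'⟫ := by
    refine ConvexOn.sub ?_ ((innerₗ _ q).concaveOn convex_univ)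
    rw [funext hΦs]
    refine convexOn_ciSup_inner_sub (EuclideanSpace.isCompact_stdSimplex _) ?_
      hdiff.continuous.continuousOn
    exact ⟨q, hq0, hq1⟩
  refine ⟨by rw [hexpect, fenchelYoungLoss]; ring, ?_⟩
  simp only [hexpect, add_le_add_iff_left]
  rw [hconvex.forall_le_iff_fderiv_eq_zero
      ((hΦsdiff ν).sub (innerSL ℝ q).differentiableAt),
    fderiv_sub_inner_eq_zero_iff (hΦsdiff ν)]

/-- Expectation-optimality of Fenchel–Young losses:
`E_{Y∼q}[d_Φ(1_Y, ν)] = E_{Y∼q}[Φ(1_Y)] − Φ(q) + d_Φ(q, ν)`, and `ν` minimizes the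
expected loss iff `∇Φ*(ν) = q`. -/
theorem fenchel_young_expectation_optimality (d : ℕ)
    (q : EuclideanSpace ℝ (Fin d)) (hq0 : ∀ i, 0 ≤ q i) (hq1 : ∑ i, q i = 1)
    (Φ : EuclideanSpace ℝ (Fin d) → ℝ) (hdiff : Differentiable ℝ Φ)
    (hconv : ConvexOn ℝ {p : EuclideanSpace ℝ (Fin d) | (∀ i, 0 ≤ p i) ∧ ∑ i, p i = 1} Φ)
    (Φs : EuclideanSpace ℝ (Fin d) → ℝ)
    (hΦs : ∀ ν, Φs ν =
      ⨆ p : {p : EuclideanSpace ℝ (Fin d) // (∀ i, 0 ≤ p i) ∧ ∑ i, p i = 1},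
        ⟪p.1, ν⟫ - Φ p.1)
    (hΦsdiff : Differentiable ℝ Φs)
    (onehot : Fin d → EuclideanSpace ℝ (Fin d))
    (hone : ∀ y i, onehot y i = if i = y then 1 else 0)
    (dΦ : EuclideanSpace ℝ (Fin d) → EuclideanSpace ℝ (Fin d) → ℝ)
    (hd : ∀ μ ν, dΦ μ ν = Φ μ + Φs ν - ⟪μ, ν⟫)
    (ν : EuclideanSpace ℝ (Fin d)) :
    (∑ y, q y * dΦ (onehot y) ν) = (∑ y, q y * Φ (onehot y)) - Φ q + dΦ q ν ∧
    ((∀ ν', (∑ y, q y * dΦ (onehot y) ν) ≤ ∑ y, q y * dΦ (onehot y) ν')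
      ↔ gradient Φs ν = q) :=
  fenchel_young_expectation_optimality_general d q hq0 hq1 Φ hdiff Φs hΦs hΦsdiff onehot hone dΦ hd
    ν
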